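/- Let F : X ⇉ Y and G : Y ⇉ Z with one of F, G polyhedral convex and the other generalized polyhedral convex. Then for any (x̄, z̄) ∈ gph(G ∘ F), any ȳ ∈ F(x̄) ∩ G⁻¹(z̄), and any w* ∈ Z*, the chain rule D*(G ∘ F)(x̄, z̄)(w*) = D*F(x̄, ȳ)(D*G(ȳ, z̄)(w*)) holds. -/

import Mathlib

/-! Put `Ω₁ = {(x, y, z) | y ∈ F x}` and `Ω₂ = {(x, y, z) | z ∈ G y}`. Then
`u ∈ D*(G ∘ F)(x̄, z̄)(w)` says exactly that `(u, 0, -w)` is normal to `Ω₁ ∩ Ω₂` at `(x̄, ȳ, z̄)`.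
One of `Ω₁`, `Ω₂` is polyhedral and the other generalized polyhedral, so this normal cone is the
sum of the two normal cones, and splitting `(u, 0, -w) = (u, -v, 0) + (0, v, -w)` accordingly
produces the intermediate `v ∈ D*G(ȳ, z̄)(w)` with `u ∈ D*F(x̄, ȳ)(v)`.

The sum rule is Farkas' lemma relative to the direction space `L` of the affine part: a normal to
`{x | ∀ i, fᵢ x ≤ αᵢ} ∩ (a + L)` agrees on `L` with a nonnegative combination of the active `fᵢ`.
Since only finitely many functionals are involved, no closedness of cones in the dual of an
infinite-dimensional space is needed. -/

open Set Pointwise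

def IsPolyhedral {X : Type*} [AddCommGroup X] [Module ℝ X] [TopologicalSpace X]
    (P : Set X) : Prop :=
  ∃ (m : ℕ) (f : Fin m → X →L[ℝ] ℝ) (α : Fin m → ℝ),
    P = {x : X | ∀ i, f i x ≤ α i}

def IsGPolyhedral {X : Type*} [AddCommGroup X] [Module ℝ X] [TopologicalSpace X]
    (Q : Set X) : Prop :=
  ∃ (P : Set X) (a : X) (L : Submodule ℝ X),
    IsPolyhedral P ∧ IsClosed (L : Set X) ∧ Q = P ∩ (a +ᵥ (L : Set X))

def normalCone {X : Type*} [AddCommGroup X] [Module ℝ X] [TopologicalSpace X]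
    (Ω : Set X) (xb : X) : Set (X →L[ℝ] ℝ) :=
  {f | ∀ x ∈ Ω, f (x - xb) ≤ 0}

def gph {X Y : Type*} (F : X → Set Y) : Set (X × Y) := {p | p.2 ∈ F p.1}

def coderiv {X Y : Type*} [AddCommGroup X] [Module ℝ X] [TopologicalSpace X]
    [AddCommGroup Y] [Module ℝ Y] [TopologicalSpace Y]
    (F : X → Set Y) (xb : X) (yb : Y) (v : Y →L[ℝ] ℝ) : Set (X →L[ℝ] ℝ) :=
  {u | ∀ x : X, ∀ y ∈ F x, u (x - xb) - v (y - yb) ≤ 0}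

def epi {X : Type*} (f : X → EReal) : Set (X × ℝ) := {p | f p.1 ≤ (p.2 : EReal)}

def subdiff {X : Type*} [AddCommGroup X] [Module ℝ X] [TopologicalSpace X]
    (f : X → EReal) (xb : X) : Set (X →L[ℝ] ℝ) :=
  {g | ∀ x : X, ((g (x - xb) : ℝ) : EReal) + f xb ≤ f x}

def singSubdiff {X : Type*} [AddCommGroup X] [Module ℝ X] [TopologicalSpace X]
    (f : X → EReal) (xb : X) : Set (X →L[ℝ] ℝ) :=
  {g | ∀ x : X, ∀ α : ℝ, f x ≤ (α : EReal) → g (x - xb) ≤ 0}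

open Filter Topology

theorem eventually_forall_add_mul_le {ι : Type*} [Finite ι] {a v b : ι → ℝ}
    (hab : ∀ i, a i ≤ b i) (hv : ∀ i, a i = b i → v i ≤ 0) :
    ∀ᶠ t in 𝓝[>] (0 : ℝ), ∀ i, a i + t * v i ≤ b i := by
  refine eventually_all.2 fun i => ?_
  rcases (hab i).lt_or_eq with hlt | heq
  · have hlim : Tendsto (fun t : ℝ => a i + t * v i) (𝓝[>] 0) (𝓝 (a i)) :=
      ((by fun_prop : Continuous fun t : ℝ => a i + t * v i).tendsto' 0 (a i) (by simp)).mono_left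
        nhdsWithin_le_nhds
    exact (hlim.eventually (eventually_lt_nhds hlt)).mono fun _ => le_of_lt
  · filter_upwards [self_mem_nhdsWithin] with t (ht : 0 < t)
    nlinarith [hv i heq]

theorem exists_mem_hull_eqOn_of_forall_le_zero {M N ι : Type*} [AddCommGroup M] [Module ℝ M]
    [AddCommGroup N] [Module ℝ N] (p : M →ₗ[ℝ] N →ₗ[ℝ] ℝ) (L : Submodule ℝ N) (s : Finset ι)
    (c : ι → M) (φ : M) (h : ∀ x ∈ L, (∀ i ∈ s, p (c i) x ≤ 0) → p φ x ≤ 0) :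
    ∃ q ∈ PointedCone.hull ℝ (c '' s), ∀ x ∈ L, p φ x = p q x := by
  classical
  induction s using Finset.induction_on generalizing c φ with
  | empty =>
    refine ⟨0, zero_mem _, fun x hx => ?_⟩
    have h₁ := h x hx (by simp)
    have h₂ := h (-x) (L.neg_mem hx) (by simp)
    simp only [map_neg, map_zero, LinearMap.zero_apply] at h₂ ⊢
    linarith
  | insert a s _ ih =>
    by_cases H : ∀ x ∈ L, (∀ i ∈ s, p (c i) x ≤ 0) → p φ x ≤ 0
    · obtain ⟨q, hq, hφq⟩ := ih c φ H
      refine ⟨q, Submodule.span_mono (image_mono ?_) hq, hφq⟩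
      simp
    push Not at H
    obtain ⟨x₀, hx₀, hs₀, hφ₀⟩ := H
    have ht : 0 < p (c a) x₀ := by
      by_contra! hle
      exact hφ₀.not_ge (h x₀ hx₀ (by simpa [hle] using hs₀))
    set t := p (c a) x₀
    -- eliminate the constraint `c a` by projecting along `x₀`, on which it is the only positive one
    set c' : ι → M := fun i => c i - (p (c i) x₀ / t) • c a
    set ψ : M := φ - (p φ x₀ / t) • c a
    have hψ : ∀ x ∈ L, (∀ i ∈ s, p (c' i) x ≤ 0) → p ψ x ≤ 0 := by
      intro x hx hc'
      have hy := h (x - (p (c a) x / t) • x₀) (L.sub_mem hx (L.smul_mem _ hx₀)) ?_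
      · simp only [ψ, map_sub, map_smul, LinearMap.sub_apply, LinearMap.smul_apply,
          smul_eq_mul] at hy ⊢
        have : p φ x₀ / t * p (c a) x = p (c a) x / t * p φ x₀ := by ring
        linarith
      · intro i hi
        simp only [Finset.mem_insert] at hi
        rcases hi with rfl | hi
        · simp [t, ht.ne']
        · have := hc' i hi
          simp only [c', map_sub, map_smul, LinearMap.sub_apply, LinearMap.smul_apply,
            smul_eq_mul] at this ⊢
          have : p (c i) x₀ / t * p (c a) x = p (c a) x / t * p (c i) x₀ := by ring
          linarith
    obtain ⟨q, hq, hψq⟩ := ih c' ψ hψ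
    have hca : c a ∈ PointedCone.hull ℝ (c '' ↑(insert a s)) :=
      PointedCone.subset_hull ⟨a, by simp, rfl⟩
    refine ⟨q + (p φ x₀ / t) • c a, add_mem ?_ (PointedCone.smul_mem _ (by positivity) hca),
      fun x hx => ?_⟩
    · refine Submodule.span_le.2 ?_ hq
      rintro _ ⟨i, hi, rfl⟩
      have hci : c i ∈ PointedCone.hull ℝ (c '' ↑(insert a s)) :=
        PointedCone.subset_hull ⟨i, by simp [Finset.mem_coe.1 hi], rfl⟩
      have hcoef : 0 ≤ -(p (c i) x₀ / t) :=
        neg_nonneg.2 (div_nonpos_of_nonpos_of_nonneg (hs₀ i hi) ht.le)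
      simpa [c', sub_eq_add_neg, neg_smul] using add_mem hci (PointedCone.smul_mem _ hcoef hca)
    · have := hψq x hx
      simp only [ψ, map_add, map_sub, map_smul, LinearMap.add_apply, LinearMap.sub_apply,
        LinearMap.smul_apply] at this ⊢
      linarith

def polyhedron {E ι : Type*} [AddCommGroup E] [Module ℝ E] [TopologicalSpace E]
    (f : ι → E →L[ℝ] ℝ) (α : ι → ℝ) : Set E :=
  {x | ∀ i, f i x ≤ α i}

def normalPointedCone {E : Type*} [AddCommGroup E] [Module ℝ E] [TopologicalSpace E]
    (Ω : Set E) (xb : E) : PointedCone ℝ (E →L[ℝ] ℝ) where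
  carrier := normalCone Ω xb
  add_mem' hf hg x hx := by
    simpa using add_nonpos (hf x hx) (hg x hx)
  zero_mem' _ _ := by simp
  smul_mem' c f hf x hx := by
    change c • f (x - xb) ≤ 0
    exact mul_nonpos_of_nonneg_of_nonpos c.2 (hf x hx)

theorem mem_vadd_submodule_iff {E : Type*} [AddCommGroup E] [Module ℝ E] {a x : E}
    {L : Submodule ℝ E} : x ∈ a +ᵥ (L : Set E) ↔ x - a ∈ L := by
  simp [mem_vadd_set_iff_neg_vadd_mem, sub_eq_neg_add]

section NormalCone

variable {E : Type*} [AddCommGroup E] [Module ℝ E] [TopologicalSpace E]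

theorem normalCone_add_subset_inter (A B : Set E) (xb : E) :
    normalCone A xb + normalCone B xb ⊆ normalCone (A ∩ B) xb := by
  rintro _ ⟨p, hp, q, hq, rfl⟩ x ⟨hxA, hxB⟩
  simpa using add_nonpos (hp x hxA) (hq x hxB)

theorem mem_normalCone_polyhedron {ι : Type*} (f : ι → E →L[ℝ] ℝ) (α : ι → ℝ) {xb : E} {i : ι}
    (hi : f i xb = α i) : f i ∈ normalCone (polyhedron f α) xb := fun x hx => by
  simpa [hi] using hx i

theorem mem_normalCone_vadd_submodule {a xb : E} {L : Submodule ℝ E} {r : E →L[ℝ] ℝ}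
    (hxb : xb ∈ a +ᵥ (L : Set E)) (hr : ∀ d ∈ L, r d = 0) :
    r ∈ normalCone (a +ᵥ (L : Set E)) xb := fun x hx => by
  have hd : x - xb ∈ L := by
    simpa using L.sub_mem (mem_vadd_submodule_iff.1 hx) (mem_vadd_submodule_iff.1 hxb)
  rw [hr _ hd]

theorem exists_mem_hull_eqOn_of_mem_normalCone_polyhedron_inter {ι : Type*} [Finite ι]
    (f : ι → E →L[ℝ] ℝ) (α : ι → ℝ) (a : E) (L : Submodule ℝ E) {xb : E} {u : E →L[ℝ] ℝ}
    (hxb : xb ∈ polyhedron f α ∩ (a +ᵥ (L : Set E)))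
    (hu : u ∈ normalCone (polyhedron f α ∩ (a +ᵥ (L : Set E))) xb) :
    ∃ p ∈ PointedCone.hull ℝ (f '' {i | f i xb = α i}), ∀ d ∈ L, u d = p d := by
  have hactive := Set.toFinite {i | f i xb = α i}
  have hfeasible : ∀ d ∈ L, (∀ i ∈ hactive.toFinset, f i d ≤ 0) → u d ≤ 0 := by
    intro d hd hdi
    obtain ⟨t, htd, ht⟩ := (eventually_forall_add_mul_le (a := fun i => f i xb)
      (v := fun i => f i d) hxb.1 fun i hi => hdi i (by simpa using hi)).and
        self_mem_nhdsWithin |>.exists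
    have hmem : xb + t • d ∈ polyhedron f α ∩ (a +ᵥ (L : Set E)) := by
      refine ⟨fun i => by simpa using htd i, mem_vadd_submodule_iff.2 ?_⟩
      simpa [add_sub_right_comm] using L.add_mem (mem_vadd_submodule_iff.1 hxb.2) (L.smul_mem t hd)
    have := hu _ hmem
    simp only [add_sub_cancel_left, map_smul, smul_eq_mul] at this
    exact nonpos_of_mul_nonpos_right this ht
  obtain ⟨q, hq, huq⟩ := exists_mem_hull_eqOn_of_forall_le_zero (ContinuousLinearMap.coeLM ℝ) L
    hactive.toFinset f u hfeasible
  rw [hactive.coe_toFinset] at hq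
  exact ⟨q, hq, huq⟩

theorem normalCone_inter_of_isPolyhedral_of_isGPolyhedral {P Q : Set E} (hP : IsPolyhedral P)
    (hQ : IsGPolyhedral Q) {xb : E} (hxb : xb ∈ P ∩ Q) :
    normalCone (P ∩ Q) xb = normalCone P xb + normalCone Q xb := by
  refine Subset.antisymm (fun u hu => ?_) (normalCone_add_subset_inter P Q xb)
  obtain ⟨m, f, α, rfl⟩ := hP
  obtain ⟨_, a, L, ⟨k, g, β, rfl⟩, -, rfl⟩ := hQ
  have hinter : polyhedron f α ∩ (polyhedron g β ∩ (a +ᵥ (L : Set E))) =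
      polyhedron (Sum.elim f g) (Sum.elim α β) ∩ (a +ᵥ (L : Set E)) := by
    ext
    simp [polyhedron, Sum.forall, and_assoc]
  change xb ∈ polyhedron f α ∩ (polyhedron g β ∩ (a +ᵥ (L : Set E))) at hxb
  change u ∈ normalCone (polyhedron f α ∩ (polyhedron g β ∩ (a +ᵥ (L : Set E)))) xb at hu
  rw [hinter] at hu hxb
  obtain ⟨p, hp, hup⟩ := exists_mem_hull_eqOn_of_mem_normalCone_polyhedron_inter _ _ a L hxb hu
  have hsplit : PointedCone.hull ℝ (Sum.elim f g '' {i | Sum.elim f g i xb = Sum.elim α β i}) ≤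
      normalPointedCone (polyhedron f α) xb ⊔ normalPointedCone (polyhedron g β) xb := by
    refine Submodule.span_le.2 ?_
    rintro _ ⟨i | j, hi, rfl⟩
    · exact Submodule.mem_sup_left (mem_normalCone_polyhedron f α hi)
    · exact Submodule.mem_sup_right (mem_normalCone_polyhedron g β hi)
  obtain ⟨p₁, hp₁, p₂, hp₂, rfl⟩ := Submodule.mem_sup.1 (hsplit hp)
  have hrest : u - (p₁ + p₂) ∈ normalCone (a +ᵥ (L : Set E)) xb :=
    mem_normalCone_vadd_submodule hxb.2 fun d hd => by simp [hup d hd]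
  have hQ : u - p₁ ∈ normalCone (polyhedron g β ∩ (a +ᵥ (L : Set E))) xb := by
    convert normalCone_add_subset_inter _ _ xb (Set.add_mem_add hp₂ hrest) using 1
    abel
  exact ⟨p₁, hp₁, u - p₁, hQ, add_sub_cancel p₁ u⟩

end NormalCone

section Preimage

variable {E E' : Type*} [AddCommGroup E] [Module ℝ E] [TopologicalSpace E]
  [AddCommGroup E'] [Module ℝ E'] [TopologicalSpace E']

theorem IsPolyhedral.preimage {P : Set E'} (hP : IsPolyhedral P) (A : E →L[ℝ] E') :
    IsPolyhedral (A ⁻¹' P) := by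
  obtain ⟨m, f, α, rfl⟩ := hP
  exact ⟨m, fun i => (f i).comp A, α, rfl⟩

theorem IsGPolyhedral.preimage {Q : Set E'} (hQ : IsGPolyhedral Q) {A : E →L[ℝ] E'} {B : E' → E}
    (hAB : Function.RightInverse B A) : IsGPolyhedral (A ⁻¹' Q) := by
  obtain ⟨P, a, L, hP, hL, rfl⟩ := hQ
  refine ⟨A ⁻¹' P, B a, L.comap (A : E →ₗ[ℝ] E'), hP.preimage A, hL.preimage A.continuous, ?_⟩
  ext x
  rw [mem_preimage, mem_inter_iff, mem_inter_iff, mem_vadd_submodule_iff,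
    mem_vadd_submodule_iff, Submodule.mem_comap, ContinuousLinearMap.coe_coe, map_sub, hAB a,
    mem_preimage]

theorem exists_eq_comp_of_mem_normalCone_preimage {Ω : Set E'} {A : E →L[ℝ] E'}
    {B : E' →L[ℝ] E} (hAB : Function.RightInverse B A) {xb : E} (hxb : A xb ∈ Ω)
    {φ : E →L[ℝ] ℝ} (hφ : φ ∈ normalCone (A ⁻¹' Ω) xb) :
    ∃ ψ ∈ normalCone Ω (A xb), φ = ψ.comp A := by
  have hker : ∀ k, A k = 0 → φ k = 0 := by
    intro k hk
    have h₁ := hφ (xb + k) (by simpa [hk] using hxb)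
    have h₂ := hφ (xb - k) (by simpa [hk] using hxb)
    simp only [add_sub_cancel_left, sub_sub_cancel_left, map_neg] at h₁ h₂
    linarith
  have hfactor : ∀ x, φ x = φ (B (A x)) := fun x => by
    have := hker (x - B (A x)) (by simp [hAB (A x)])
    rwa [map_sub, sub_eq_zero] at this
  refine ⟨φ.comp B, fun y hy => ?_, ContinuousLinearMap.ext hfactor⟩
  have := hφ (B y) (by simpa [hAB y] using hy)
  simpa [← hfactor xb] using this

end Preimage

section Coderivative

variable {X Y Z : Type*} [AddCommGroup X] [Module ℝ X] [TopologicalSpace X]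
  [AddCommGroup Y] [Module ℝ Y] [TopologicalSpace Y] [AddCommGroup Z] [Module ℝ Z]
  [TopologicalSpace Z]

theorem mem_coderiv_of_mem_normalCone {F : X → Set Y} {xb : X} {yb : Y}
    {ψ : X × Y →L[ℝ] ℝ} (hψ : ψ ∈ normalCone (gph F) (xb, yb)) {u : X →L[ℝ] ℝ}
    {v : Y →L[ℝ] ℝ} (hu : ∀ x, ψ (x, 0) = u x) (hv : ∀ y, ψ (0, y) = -v y) :
    u ∈ coderiv F xb yb v := fun x y hy => by
  have h := hψ (x, y) hy
  rw [show (x, y) - (xb, yb) = (x - xb, 0) + (0, y - yb) by simp, map_add, hu, hv] at h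
  linarith

theorem mem_coderiv_comp_of_mem_coderiv {F : X → Set Y} {G : Y → Set Z} {xb : X} {yb : Y}
    {zb : Z} {u : X →L[ℝ] ℝ} {v : Y →L[ℝ] ℝ} {w : Z →L[ℝ] ℝ} (hv : v ∈ coderiv G yb zb w)
    (hu : u ∈ coderiv F xb yb v) : u ∈ coderiv (fun x => ⋃ y ∈ F x, G y) xb zb w :=
  fun x z hz => by
    obtain ⟨y, hy, hzy⟩ := mem_iUnion₂.1 hz
    linarith [hu x y hy, hv y z hzy]

variable (X Y Z) in
def firstTwo : X × Y × Z →L[ℝ] X × Y :=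
  (ContinuousLinearMap.fst ℝ X (Y × Z)).prod
    ((ContinuousLinearMap.fst ℝ Y Z).comp (ContinuousLinearMap.snd ℝ X (Y × Z)))

theorem firstTwo_rightInverse :
    Function.RightInverse ((ContinuousLinearMap.fst ℝ X Y).prod
      ((ContinuousLinearMap.inl ℝ Y Z).comp (ContinuousLinearMap.snd ℝ X Y))) (firstTwo X Y Z) :=
  fun _ => rfl

theorem mem_normalCone_of_mem_coderiv_comp {F : X → Set Y} {G : Y → Set Z} {xb : X} {yb : Y}
    {zb : Z} {u : X →L[ℝ] ℝ} {w : Z →L[ℝ] ℝ}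
    (hu : u ∈ coderiv (fun x => ⋃ y ∈ F x, G y) xb zb w) :
    u.comp (ContinuousLinearMap.fst ℝ X (Y × Z)) -
        w.comp ((ContinuousLinearMap.snd ℝ Y Z).comp (ContinuousLinearMap.snd ℝ X (Y × Z))) ∈
      normalCone (firstTwo X Y Z ⁻¹' gph F ∩ ContinuousLinearMap.snd ℝ X (Y × Z) ⁻¹' gph G)
        (xb, yb, zb) := by
  rintro ⟨x, y, z⟩ ⟨hxy, hyz⟩
  simpa using hu x z (mem_iUnion₂.2 ⟨y, hxy, hyz⟩)

theorem exists_mem_coderiv_of_mem_normalCone_add {F : X → Set Y} {G : Y → Set Z} {xb : X}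
    {yb : Y} {zb : Z} (hy : yb ∈ F xb) (hz : zb ∈ G yb) {u : X →L[ℝ] ℝ} {w : Z →L[ℝ] ℝ}
    (hu : u.comp (ContinuousLinearMap.fst ℝ X (Y × Z)) -
        w.comp ((ContinuousLinearMap.snd ℝ Y Z).comp (ContinuousLinearMap.snd ℝ X (Y × Z))) ∈
      normalCone (firstTwo X Y Z ⁻¹' gph F) (xb, yb, zb) +
        normalCone (ContinuousLinearMap.snd ℝ X (Y × Z) ⁻¹' gph G) (xb, yb, zb)) :
    ∃ v ∈ coderiv G yb zb w, u ∈ coderiv F xb yb v := by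
  obtain ⟨φ₁, hφ₁, φ₂, hφ₂, hφ⟩ := hu
  obtain ⟨ψ₁, hψ₁, rfl⟩ := exists_eq_comp_of_mem_normalCone_preimage firstTwo_rightInverse hy hφ₁
  obtain ⟨ψ₂, hψ₂, rfl⟩ := exists_eq_comp_of_mem_normalCone_preimage
    (B := ContinuousLinearMap.inr ℝ X (Y × Z)) (fun _ => rfl) hz hφ₂
  have hval : ∀ x y z, ψ₁ (x, y) + ψ₂ (y, z) = u x - w z := fun x y z => by
    simpa [firstTwo] using DFunLike.congr_fun hφ (x, y, z)
  refine ⟨ψ₂.comp (ContinuousLinearMap.inl ℝ Y Z),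
    mem_coderiv_of_mem_normalCone hψ₂ (fun _ => rfl) fun z => ?_,
    mem_coderiv_of_mem_normalCone hψ₁ (fun x => ?_) fun y => ?_⟩
  · simpa [Prod.mk_zero_zero] using hval 0 0 z
  · simpa [Prod.mk_zero_zero] using hval x 0 0
  · simpa [eq_neg_iff_add_eq_zero] using hval 0 y 0

end Coderivative

variable {X : Type*} [AddCommGroup X] [Module ℝ X] [TopologicalSpace X]
  [IsTopologicalAddGroup X] [ContinuousSMul ℝ X] [LocallyConvexSpace ℝ X] [T2Space X]
variable {Y : Type*} [AddCommGroup Y] [Module ℝ Y] [TopologicalSpace Y]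
  [IsTopologicalAddGroup Y] [ContinuousSMul ℝ Y] [LocallyConvexSpace ℝ Y] [T2Space Y]
variable {Z : Type*} [AddCommGroup Z] [Module ℝ Z] [TopologicalSpace Z]
  [IsTopologicalAddGroup Z] [ContinuousSMul ℝ Z] [LocallyConvexSpace ℝ Z] [T2Space Z]

theorem coderivative_chain_rule
    (F : X → Set Y) (G : Y → Set Z)
    (hFG : (IsPolyhedral (gph F) ∧ IsGPolyhedral (gph G)) ∨
           (IsGPolyhedral (gph F) ∧ IsPolyhedral (gph G)))
    (xb : X) (yb : Y) (zb : Z) (hy : yb ∈ F xb) (hz : zb ∈ G yb)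
    (w : Z →L[ℝ] ℝ) :
    coderiv (fun x => ⋃ y ∈ F x, G y) xb zb w =
      ⋃ v ∈ coderiv G yb zb w, coderiv F xb yb v := by
  refine Subset.antisymm (fun u hu => ?_)
    (iUnion₂_subset fun v hv u hu => mem_coderiv_comp_of_mem_coderiv hv hu)
  set πF := firstTwo X Y Z
  set πG := ContinuousLinearMap.snd ℝ X (Y × Z)
  have he : (xb, yb, zb) ∈ πF ⁻¹' gph F ∩ πG ⁻¹' gph G := ⟨hy, hz⟩
  have hπG : Function.RightInverse (ContinuousLinearMap.inr ℝ X (Y × Z)) πG := fun _ => rfl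
  have hsum : normalCone (πF ⁻¹' gph F ∩ πG ⁻¹' gph G) (xb, yb, zb) =
      normalCone (πF ⁻¹' gph F) (xb, yb, zb) + normalCone (πG ⁻¹' gph G) (xb, yb, zb) := by
    rcases hFG with ⟨hF, hG⟩ | ⟨hF, hG⟩
    · exact normalCone_inter_of_isPolyhedral_of_isGPolyhedral (hF.preimage πF)
        (hG.preimage hπG) he
    · rw [inter_comm, add_comm]
      exact normalCone_inter_of_isPolyhedral_of_isGPolyhedral (hG.preimage πG)
        (hF.preimage firstTwo_rightInverse) (inter_comm _ _ ▸ he)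
  simpa using exists_mem_coderiv_of_mem_normalCone_add hy hz
    (hsum ▸ mem_normalCone_of_mem_coderiv_comp hu)
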